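/- For every N ≥ 1, every K ∈ ℕ, and every pair of starting decks d₁, d₂ (permutations of Fin N), the total variation distance between the K-step distributions of the random-transpositions shuffle satisfies TV(μ_K(d₁), μ_K(d₂)) ≤ N · (1 − 1/N²)^K. -/

import Mathlib

open scoped ENNReal

/-- Total variation distance between two distributions: `(1/2) Σ_x |μ(x) − ν(x)|`. -/
noncomputable def tvDist {X : Type*} (μ ν : PMF X) : ℝ≥0∞ :=
  (1 / 2) * ∑' x, max (μ x - ν x) (ν x - μ x)

/-- One step of the random-transpositions shuffle: sample positions `p` and `p'` independently
and uniformly, and swap the cards at positions `p` and `p'` (if `p = p'` nothing changes). -/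
noncomputable def rtransStep {N : ℕ} (h : 0 < N) (d : Equiv.Perm (Fin N)) :
    PMF (Equiv.Perm (Fin N)) :=
  haveI : Nonempty (Fin N) := ⟨⟨0, h⟩⟩
  (PMF.uniformOfFintype (Fin N)).bind fun p =>
    (PMF.uniformOfFintype (Fin N)).bind fun p' =>
      PMF.pure (d * Equiv.swap p p')

/-- Distribution of the deck after `K` steps of the random-transpositions shuffle from `d`. -/
noncomputable def rtransWalk {N : ℕ} (h : 0 < N) (d : Equiv.Perm (Fin N)) :
    ℕ → PMF (Equiv.Perm (Fin N))
  | 0 => PMF.pure d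
  | (K + 1) => (rtransWalk h d K).bind (rtransStep h)

/-!
Coupling. Run two decks together: at each step pick a card `c` and a position `p` uniformly and,
in both decks, swap card `c` into position `p`; each deck on its own performs the
random-transpositions shuffle. Let `D` be the number of positions where the decks differ. A step
never increases `D`, and lowers it when `c` sits at different positions in the two decks and the
decks differ at `p`, an event of probability `(D / N)²`. Since `D² ≥ D`, the expectation of `D`
contracts by `1 - 1 / N²` per step, starting from at most `N`, and the total variation distance is
at most the probability `P(D ≠ 0) ≤ E D` that the coupled decks still differ.
-/

namespace PMF

variable {α β : Type*}

noncomputable def expect (μ : PMF α) (f : α → ℝ≥0∞) : ℝ≥0∞ := ∑' x, μ x * f x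

theorem expect_pure (a : α) (f : α → ℝ≥0∞) : (pure a).expect f = f a := by
  classical
  simp [expect, pure_apply]

theorem expect_bind (μ : PMF α) (κ : α → PMF β) (f : β → ℝ≥0∞) :
    (μ.bind κ).expect f = μ.expect fun a => (κ a).expect f := by
  simp only [expect, bind_apply, ← ENNReal.tsum_mul_right, ← ENNReal.tsum_mul_left,
    mul_assoc]
  exact ENNReal.tsum_comm

theorem expect_uniformOfFintype [Fintype α] [Nonempty α] (f : α → ℝ≥0∞) :
    (uniformOfFintype α).expect f = (Fintype.card α : ℝ≥0∞)⁻¹ * ∑ x, f x := by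
  simp [expect, tsum_fintype, Finset.mul_sum]

theorem toOuterMeasure_le_expect (μ : PMF α) (s : Set α) {f : α → ℝ≥0∞}
    (hf : ∀ x ∈ s, 1 ≤ f x) : μ.toOuterMeasure s ≤ μ.expect f := by
  rw [toOuterMeasure_apply]
  refine ENNReal.tsum_le_tsum fun x => ?_
  by_cases hx : x ∈ s
  · simpa [hx] using mul_le_mul_right (hf x hx) (μ x)
  · simp [hx]

theorem map_fst_apply [Fintype α] [Fintype β] (π : PMF (α × β)) (a : α) :
    π.map Prod.fst a = ∑ b, π (a, b) := by
  classical
  simp only [map_apply, tsum_fintype, Fintype.sum_prod_type]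
  rw [Finset.sum_comm]
  simp

theorem map_snd_apply [Fintype α] [Fintype β] (π : PMF (α × β)) (b : β) :
    π.map Prod.snd b = ∑ a, π (a, b) := by
  classical
  simp [map_apply, tsum_fintype, Fintype.sum_prod_type, Finset.sum_ite_eq]

theorem expect_bind_le_mul {μ : PMF α} {κ : α → PMF α} {f : α → ℝ≥0∞} {r : ℝ≥0∞}
    (hκ : ∀ a, (κ a).expect f ≤ r * f a) : (μ.bind κ).expect f ≤ r * μ.expect f := by
  rw [expect_bind, expect, expect, ← ENNReal.tsum_mul_left]
  exact ENNReal.tsum_le_tsum fun a => by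
    rw [mul_left_comm]; exact mul_le_mul_right (hκ a) _

theorem bind_uniformOfFintype_comp_equiv [Fintype α] [Nonempty α] (e : α ≃ α)
    (f : α → PMF β) : (uniformOfFintype α).bind (f ∘ e) = (uniformOfFintype α).bind f := by
  ext b
  simp only [bind_apply, uniformOfFintype_apply, Function.comp_apply]
  exact e.tsum_eq fun a => (Fintype.card α : ℝ≥0∞)⁻¹ * f a b

end PMF

theorem ENNReal.inv_mul_natCast_sub_one {n : ℕ} (hn : n ≠ 0) :
    (n : ℝ≥0∞)⁻¹ * ((n - 1 : ℕ) : ℝ≥0∞) = 1 - 1 / n := by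
  rw [ENNReal.natCast_sub, Nat.cast_one,
    ENNReal.mul_sub fun _ _ => ENNReal.inv_ne_top.mpr (by exact_mod_cast hn),
    ENNReal.inv_mul_cancel (by exact_mod_cast hn) (ENNReal.natCast_ne_top n), mul_one, one_div]

theorem ENNReal.sum_tsub_sum_flip_le {α : Type*} [Fintype α] [DecidableEq α]
    (f : α → α → ℝ≥0∞) (x : α) :
    ∑ y, f x y - ∑ y, f y x ≤ ∑ y, if x ≠ y then f x y else 0 := by
  have hdiag : ∑ y, f x y = f x x + ∑ y, if x ≠ y then f x y else 0 := calc
    ∑ y, f x y = ∑ y, ((if x = y then f x y else 0) + if x ≠ y then f x y else 0) :=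
      Finset.sum_congr rfl fun y _ => by by_cases h : x = y <;> simp [h]
    _ = f x x + ∑ y, if x ≠ y then f x y else 0 := by
      rw [Finset.sum_add_distrib, Finset.sum_ite_eq, if_pos (Finset.mem_univ x)]
  rw [tsub_le_iff_right, hdiag, add_comm]
  gcongr
  exact Finset.single_le_sum (fun y _ => (zero_le : 0 ≤ f y x)) (Finset.mem_univ x)

theorem tvDist_map_fst_map_snd_le {α : Type*} [Fintype α] (π : PMF (α × α)) :
    tvDist (π.map Prod.fst) (π.map Prod.snd) ≤ π.toOuterMeasure {z | z.1 ≠ z.2} := by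
  classical
  set P := π.toOuterMeasure {z | z.1 ≠ z.2}
  have hP : P = ∑ x, ∑ y, if x ≠ y then π (x, y) else 0 := by
    simp [P, Fintype.sum_prod_type, Set.indicator_apply]
  have hP' : P = ∑ x, ∑ y, if x ≠ y then π (y, x) else 0 := by
    rw [hP, Finset.sum_comm]; simp only [ne_comm]
  calc tvDist (π.map Prod.fst) (π.map Prod.snd)
      ≤ 1 / 2 * ∑ x, ((∑ y, if x ≠ y then π (x, y) else 0)
          + ∑ y, if x ≠ y then π (y, x) else 0) := by
        rw [tvDist, tsum_fintype]
        gcongr with x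
        simp only [PMF.map_fst_apply, PMF.map_snd_apply]
        exact max_le (le_add_right (ENNReal.sum_tsub_sum_flip_le (fun a b => π (a, b)) x))
          (le_add_left (ENNReal.sum_tsub_sum_flip_le (fun a b => π (b, a)) x))
    _ = P := by
        rw [Finset.sum_add_distrib, ← hP, ← hP', ← two_mul, ← mul_assoc, one_div,
          ENNReal.inv_mul_cancel two_ne_zero ENNReal.ofNat_ne_top, one_mul]

open Finset

namespace RandomTranspositions

variable {α : Type*} [Fintype α] [DecidableEq α]

def mismatches (a b : Equiv.Perm α) : Finset α := {i | a i ≠ b i}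

@[simp]
theorem mem_mismatches {a b : Equiv.Perm α} {i : α} : i ∈ mismatches a b ↔ a i ≠ b i := by
  simp [mismatches]

theorem one_le_card_mismatches {a b : Equiv.Perm α} (h : a ≠ b) : 1 ≤ #(mismatches a b) := by
  obtain ⟨i, hi⟩ := not_forall.mp (mt Equiv.ext h)
  exact card_pos.mpr ⟨i, mem_mismatches.mpr hi⟩

def mismatchCount (x : Equiv.Perm α × Equiv.Perm α) : ℝ≥0∞ := #(mismatches x.1 x.2)

theorem mismatchCount_le_card (x : Equiv.Perm α × Equiv.Perm α) :
    mismatchCount x ≤ Fintype.card α := by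
  simpa [mismatchCount] using card_le_univ (mismatches x.1 x.2)

theorem mismatches_inv (a b : Equiv.Perm α) :
    mismatches a⁻¹ b⁻¹ = (mismatches a b).map a.toEmbedding := by
  ext c
  rw [mem_mismatches, mem_map_equiv, mem_mismatches, Equiv.Perm.inv_def, Equiv.Perm.inv_def,
    Equiv.apply_symm_apply, ne_comm, Ne, Equiv.symm_apply_eq]

theorem card_mismatches_inv (a b : Equiv.Perm α) :
    #(mismatches a⁻¹ b⁻¹) = #(mismatches a b) := by
  rw [mismatches_inv, card_map]

theorem mismatches_mul_right (a b σ : Equiv.Perm α) :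
    mismatches (a * σ) (b * σ) = (mismatches a b).map σ.symm.toEmbedding := by
  ext i
  simp

-- Both new decks hold card `a q = b r` at `p`, and `q`, `r` were already mismatches.
theorem mismatches_mul_swap_subset {a b : Equiv.Perm α} {q r : α} (hc : a q = b r)
    (hqr : q ≠ r) (p : α) :
    mismatches (a * Equiv.swap q p) (b * Equiv.swap r p) ⊆ (mismatches a b).erase p := by
  intro i hi
  rw [mem_mismatches] at hi
  have hip : i ≠ p := by
    rintro rfl
    simp [hc] at hi
  refine mem_erase.mpr ⟨hip, mem_mismatches.mpr ?_⟩
  by_cases hiq : i = q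
  · rw [hiq, hc]
    exact b.injective.ne hqr.symm
  by_cases hir : i = r
  · rw [hir, ← hc]
    exact a.injective.ne hqr.symm
  rwa [Equiv.Perm.mul_apply, Equiv.Perm.mul_apply, Equiv.swap_apply_of_ne_of_ne hiq hip,
    Equiv.swap_apply_of_ne_of_ne hir hip] at hi

-- `d⁻¹ c` is the position of card `c`; afterwards card `c` lies at position `p`.
def moveCard (d : Equiv.Perm α) (c p : α) : Equiv.Perm α := d * Equiv.swap (d⁻¹ c) p

theorem card_mismatches_moveCard_add_le (a b : Equiv.Perm α) (c p : α) :
    #(mismatches (moveCard a c p) (moveCard b c p))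
      + (if c ∈ mismatches a⁻¹ b⁻¹ ∧ p ∈ mismatches a b then 1 else 0)
      ≤ #(mismatches a b) := by
  by_cases hc : c ∈ mismatches a⁻¹ b⁻¹
  · have hsub : mismatches (moveCard a c p) (moveCard b c p) ⊆ (mismatches a b).erase p :=
      mismatches_mul_swap_subset (by simp) (mem_mismatches.mp hc) p
    by_cases hp : p ∈ mismatches a b
    · rw [if_pos ⟨hc, hp⟩, ← card_erase_add_one hp]
      exact Nat.add_le_add_right (card_le_card hsub) 1
    · rw [if_neg (fun h => hp h.2), add_zero, ← erase_eq_of_notMem hp]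
      exact card_le_card hsub
  · have hab : b⁻¹ c = a⁻¹ c := by simpa [eq_comm] using hc
    simp [hc, moveCard, hab, mismatches_mul_right]

theorem sum_card_mismatches_moveCard_le (a b : Equiv.Perm α) :
    ∑ c, ∑ p, #(mismatches (moveCard a c p) (moveCard b c p))
      ≤ (Fintype.card α ^ 2 - 1) * #(mismatches a b) := by
  set D := #(mismatches a b)
  have hgain : ∑ c : α, ∑ p : α,
      (if c ∈ mismatches a⁻¹ b⁻¹ ∧ p ∈ mismatches a b then 1 else 0) = D * D := by
    simp_rw [ite_and, sum_ite_irrel, sum_const_zero, sum_ite_mem, univ_inter, sum_const,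
      smul_eq_mul, mul_one, card_mismatches_inv, D]
  have hstep : ∑ c, ∑ p, #(mismatches (moveCard a c p) (moveCard b c p)) + D * D
      ≤ Fintype.card α ^ 2 * D := by
    calc _ = ∑ c : α, ∑ p : α, (#(mismatches (moveCard a c p) (moveCard b c p))
            + if c ∈ mismatches a⁻¹ b⁻¹ ∧ p ∈ mismatches a b then 1 else 0) := by
          simp_rw [← hgain, ← sum_add_distrib]
      _ ≤ ∑ _c : α, ∑ _p : α, D :=
          sum_le_sum fun c _ => sum_le_sum fun p _ => card_mismatches_moveCard_add_le a b c p
      _ = Fintype.card α ^ 2 * D := by simp [sq, mul_assoc]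
  have hD : D ≤ D * D := Nat.le_mul_self D
  rw [Nat.sub_one_mul]
  omega

variable {N : ℕ}

theorem rtransStep_eq_bind_moveCard [Nonempty (Fin N)] (h : 0 < N)
    (d : Equiv.Perm (Fin N)) :
    rtransStep h d = (PMF.uniformOfFintype (Fin N)).bind fun c =>
      (PMF.uniformOfFintype (Fin N)).bind fun p => PMF.pure (moveCard d c p) :=
  (PMF.bind_uniformOfFintype_comp_equiv d⁻¹ _).symm

noncomputable def coupledStep (h : 0 < N) (x : Equiv.Perm (Fin N) × Equiv.Perm (Fin N)) :
    PMF (Equiv.Perm (Fin N) × Equiv.Perm (Fin N)) :=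
  haveI : Nonempty (Fin N) := ⟨⟨0, h⟩⟩
  (PMF.uniformOfFintype (Fin N)).bind fun c =>
    (PMF.uniformOfFintype (Fin N)).bind fun p =>
      PMF.pure (moveCard x.1 c p, moveCard x.2 c p)

noncomputable def coupledWalk (h : 0 < N) (x : Equiv.Perm (Fin N) × Equiv.Perm (Fin N)) :
    ℕ → PMF (Equiv.Perm (Fin N) × Equiv.Perm (Fin N))
  | 0 => PMF.pure x
  | K + 1 => (coupledWalk h x K).bind (coupledStep h)

theorem map_fst_coupledStep (h : 0 < N) (x : Equiv.Perm (Fin N) × Equiv.Perm (Fin N)) :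
    (coupledStep h x).map Prod.fst = rtransStep h x.1 := by
  have : Nonempty (Fin N) := ⟨⟨0, h⟩⟩
  simp only [coupledStep, rtransStep_eq_bind_moveCard, PMF.map_bind, PMF.pure_map]

theorem map_snd_coupledStep (h : 0 < N) (x : Equiv.Perm (Fin N) × Equiv.Perm (Fin N)) :
    (coupledStep h x).map Prod.snd = rtransStep h x.2 := by
  have : Nonempty (Fin N) := ⟨⟨0, h⟩⟩
  simp only [coupledStep, rtransStep_eq_bind_moveCard, PMF.map_bind, PMF.pure_map]

theorem map_coupledWalk (h : 0 < N)
    {f : Equiv.Perm (Fin N) × Equiv.Perm (Fin N) → Equiv.Perm (Fin N)}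
    (hf : ∀ x, (coupledStep h x).map f = rtransStep h (f x))
    (x : Equiv.Perm (Fin N) × Equiv.Perm (Fin N)) (K : ℕ) :
    (coupledWalk h x K).map f = rtransWalk h (f x) K := by
  induction K with
  | zero => exact PMF.pure_map f x
  | succ K ih =>
    rw [coupledWalk, rtransWalk, PMF.map_bind, ← ih, PMF.bind_map]
    simp only [Function.comp_def, hf]

theorem expect_coupledStep_le (h : 0 < N) (x : Equiv.Perm (Fin N) × Equiv.Perm (Fin N)) :
    (coupledStep h x).expect mismatchCount
      ≤ (1 - 1 / (N : ℝ≥0∞) ^ 2) * mismatchCount x := by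
  simp only [coupledStep, PMF.expect_bind, PMF.expect_pure, PMF.expect_uniformOfFintype,
    Fintype.card_fin, mismatchCount]
  rw [← mul_sum, ← mul_assoc, ← ENNReal.mul_inv (by simp) (by simp), ← sq]
  have hsum := sum_card_mismatches_moveCard_le x.1 x.2
  rw [Fintype.card_fin] at hsum
  calc _ ≤ ((N : ℝ≥0∞) ^ 2)⁻¹ * (((N ^ 2 - 1) * #(mismatches x.1 x.2) : ℕ) : ℝ≥0∞) := by
        gcongr
        exact_mod_cast hsum
    _ = _ := by
        have h2 := ENNReal.inv_mul_natCast_sub_one (pow_ne_zero 2 h.ne')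
        rw [Nat.cast_pow] at h2
        rw [Nat.cast_mul, ← mul_assoc, h2]

theorem expect_coupledWalk_le (h : 0 < N) (x : Equiv.Perm (Fin N) × Equiv.Perm (Fin N))
    (K : ℕ) :
    (coupledWalk h x K).expect mismatchCount
      ≤ (1 - 1 / (N : ℝ≥0∞) ^ 2) ^ K * mismatchCount x := by
  induction K with
  | zero => simp [coupledWalk, PMF.expect_pure]
  | succ K ih =>
    calc (coupledWalk h x (K + 1)).expect mismatchCount
        ≤ (1 - 1 / (N : ℝ≥0∞) ^ 2) * (coupledWalk h x K).expect mismatchCount :=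
          PMF.expect_bind_le_mul (expect_coupledStep_le h)
      _ ≤ (1 - 1 / (N : ℝ≥0∞) ^ 2) ^ (K + 1) * mismatchCount x := by
          rw [pow_succ' _ K, mul_assoc]
          gcongr

end RandomTranspositions

open RandomTranspositions

/-- **Rapid mixing of the random-transpositions shuffle (upper bound).** For any `N ≥ 1`, `K`,
and starting decks `d₁, d₂`, the TV distance between the `K`-step distributions is at most
`N · (1 − 1/N²)^K`. -/
theorem rtransWalk_tv_le (N K : ℕ) (hN : 0 < N) (d₁ d₂ : Equiv.Perm (Fin N)) :
    tvDist (rtransWalk hN d₁ K) (rtransWalk hN d₂ K)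
      ≤ (N : ℝ≥0∞) * (1 - 1 / (N : ℝ≥0∞) ^ 2) ^ K := by
  set π := coupledWalk hN (d₁, d₂) K
  rw [← map_coupledWalk hN (map_fst_coupledStep hN) (d₁, d₂) K,
    ← map_coupledWalk hN (map_snd_coupledStep hN) (d₁, d₂) K, mul_comm]
  calc tvDist (π.map Prod.fst) (π.map Prod.snd)
      ≤ π.toOuterMeasure {z | z.1 ≠ z.2} := tvDist_map_fst_map_snd_le π
    _ ≤ π.expect mismatchCount :=
        π.toOuterMeasure_le_expect _ fun _ hz => Nat.one_le_cast.mpr (one_le_card_mismatches hz)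
    _ ≤ (1 - 1 / (N : ℝ≥0∞) ^ 2) ^ K * mismatchCount (d₁, d₂) := expect_coupledWalk_le hN _ K
    _ ≤ (1 - 1 / (N : ℝ≥0∞) ^ 2) ^ K * N := by
        gcongr
        simpa using mismatchCount_le_card (d₁, d₂)
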